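/- arXiv:2312.17616 — 10 statements merged into one kernel-verified Lean document; each statement's English description precedes it below -/
import Mathlib

section
/- Suppose the bridge B = ((L₁,T₁),(L₂,T₂),σ) has both an interpretation ι and an elimination ε. Then for every ψ ∈ L₂, T₂ ⊨ ψ ↔ ι(εψ). If in addition B satisfies (sur), then (ι, ε) is a bitranslation: ι and ε are translations, T₁ ⊨ φ ↔ ε(ιφ) for all φ ∈ L₁, and T₂ ⊨ ψ ↔ ι(εψ) for all ψ ∈ L₂. -/
/-!
Both ψ and ι (ε ψ) hold in a model `M` of `T₂` exactly when `ε ψ` holds in `σ M`. Under (sur)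
every model of `T₁` agrees on `F₁` with some `σ M`, so a sentence of `F₁` is valid in `T₁` iff
it holds in every `σ M`; through `ι` and `ε` this becomes validity of the translated sentence
in `T₂`.
-/

open FirstOrder Set

universe u v w u₁ v₁ u₂ v₂

namespace PaperStmt

/-- An `𝔏`-fragment: a set of `𝔏`-sentences containing `⊤` and `⊥` and
closed under `∧` and `∨`. -/
def IsFragment {L : FirstOrder.Language.{u, v}} (F : Set L.Sentence) : Prop :=
  (⊤ : L.Sentence) ∈ F ∧ (⊥ : L.Sentence) ∈ F ∧
    ∀ φ ψ : L.Sentence, φ ∈ F → ψ ∈ F → (φ ⊓ ψ) ∈ F ∧ (φ ⊔ ψ) ∈ F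

/-- `T_F = T^⊢ ∩ F`: the consequences of the theory `T` that lie in the fragment `F`. -/
def cons {L : FirstOrder.Language.{u, v}} (T : L.Theory) (F : Set L.Sentence) :
    Set L.Sentence :=
  {φ | φ ∈ F ∧ T ⊨ᵇ φ}

/-- Bundled models of `T` (in the universe matching semantic consequence `⊨ᵇ`). -/
abbrev Mod {L : FirstOrder.Language.{u, v}} (T : L.Theory) : Type (max u v + 1) :=
  FirstOrder.Language.Theory.ModelType.{u, v, max u v} T

/-- `Th_F(M)`: the sentences in the fragment `F` true in the model `M`. -/
def th {L : FirstOrder.Language.{u, v}} {T : L.Theory} (F : Set L.Sentence) (M : Mod T) :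
    Set L.Sentence :=
  {φ | φ ∈ F ∧ M ⊨ φ}

open FirstOrder.Language

variable {L₁ : FirstOrder.Language.{u₁, v₁}} {L₂ : FirstOrder.Language.{u₂, v₂}}
  {T₁ : L₁.Theory} {T₂ : L₂.Theory}

theorem models_iff_of_forall_realize_iff {L : FirstOrder.Language.{u, v}} {T : L.Theory}
    {φ ψ : L.Sentence} (h : ∀ M : Mod T, M ⊨ φ ↔ M ⊨ ψ) : T ⊨ᵇ (φ ⇔ ψ) :=
  Theory.models_sentence_iff.2 fun M => (Sentence.realize_iff _).2 (h M)

theorem realize_iff_of_th_eq {L : FirstOrder.Language.{u, v}} {T : L.Theory}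
    {F : Set L.Sentence} {N N' : Mod T} (h : th F N = th F N') {φ : L.Sentence} (hφ : φ ∈ F) :
    N ⊨ φ ↔ N' ⊨ φ := by
  simpa [th, hφ] using Set.ext_iff.1 h φ

/-- Property (sur) of the bridge `σ` relative to the fragment `F₁`. -/
def ThSurjective (F₁ : Set L₁.Sentence) (σ : Mod T₂ → Mod T₁) : Prop :=
  ∀ N : Mod T₁, ∃ M : Mod T₂, th F₁ N = th F₁ (σ M)

namespace ThSurjective

variable {F₁ : Set L₁.Sentence} {σ : Mod T₂ → Mod T₁}

theorem models_iff (hσ : ThSurjective F₁ σ) {φ : L₁.Sentence} (hφ : φ ∈ F₁) :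
    T₁ ⊨ᵇ φ ↔ ∀ M : Mod T₂, σ M ⊨ φ := by
  refine Theory.models_sentence_iff.trans ⟨fun h M => h (σ M), fun h N => ?_⟩
  obtain ⟨M, hM⟩ := hσ N
  exact (realize_iff_of_th_eq hM hφ).2 (h M)

theorem models_iff_models (hσ : ThSurjective F₁ σ) {φ : L₁.Sentence} (hφ : φ ∈ F₁)
    {ψ : L₂.Sentence} (h : ∀ M : Mod T₂, σ M ⊨ φ ↔ M ⊨ ψ) : T₁ ⊨ᵇ φ ↔ T₂ ⊨ᵇ ψ :=
  (hσ.models_iff hφ).trans <| (forall_congr' h).trans Theory.models_sentence_iff.symm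

theorem models_iff_of_forall_realize_iff (hσ : ThSurjective F₁ σ) {φ φ' : L₁.Sentence}
    (hφ : φ ∈ F₁) (hφ' : φ' ∈ F₁) (h : ∀ M : Mod T₂, σ M ⊨ φ ↔ σ M ⊨ φ') :
    T₁ ⊨ᵇ (φ ⇔ φ') := by
  refine PaperStmt.models_iff_of_forall_realize_iff fun N => ?_
  obtain ⟨M, hM⟩ := hσ N
  rw [realize_iff_of_th_eq hM hφ, realize_iff_of_th_eq hM hφ']
  exact h M

end ThSurjective

theorem statement_3_general {L₁ : FirstOrder.Language.{u₁, v₁}} {L₂ : FirstOrder.Language.{u₂, v₂}}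
    {F₁ : Set L₁.Sentence} {F₂ : Set L₂.Sentence} {T₁ : L₁.Theory} {T₂ : L₂.Theory}
    (σ : Mod T₂ → Mod T₁)
    (ι : L₁.Sentence → L₂.Sentence) (hιF : ∀ φ ∈ F₁, ι φ ∈ F₂)
    (hι : ∀ φ ∈ F₁, ∀ M : Mod T₂, (σ M ⊨ φ ↔ M ⊨ ι φ))
    (ε : L₂.Sentence → L₁.Sentence) (hεF : ∀ ψ ∈ F₂, ε ψ ∈ F₁)
    (hε : ∀ ψ ∈ F₂, ∀ M : Mod T₂, (σ M ⊨ ε ψ ↔ M ⊨ ψ)) :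
    (∀ ψ ∈ F₂, T₂ ⊨ᵇ (ψ ⇔ ι (ε ψ))) ∧
    ((∀ N : Mod T₁, ∃ M : Mod T₂, th F₁ N = th F₁ (σ M)) →
      (∀ φ ∈ F₁, (T₁ ⊨ᵇ φ ↔ T₂ ⊨ᵇ ι φ)) ∧
      (∀ ψ ∈ F₂, (T₂ ⊨ᵇ ψ ↔ T₁ ⊨ᵇ ε ψ)) ∧
      (∀ φ ∈ F₁, T₁ ⊨ᵇ (φ ⇔ ε (ι φ))) ∧
      (∀ ψ ∈ F₂, T₂ ⊨ᵇ (ψ ⇔ ι (ε ψ)))) := by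
  have hψ : ∀ ψ ∈ F₂, T₂ ⊨ᵇ (ψ ⇔ ι (ε ψ)) := fun ψ hψ =>
    models_iff_of_forall_realize_iff fun M => (hε ψ hψ M).symm.trans (hι _ (hεF ψ hψ) M)
  refine ⟨hψ, fun hσ => ⟨fun φ hφ => ?_, fun ψ hψ => ?_, fun φ hφ => ?_, hψ⟩⟩
  · exact ThSurjective.models_iff_models hσ hφ (hι φ hφ)
  · exact (ThSurjective.models_iff_models hσ (hεF ψ hψ) (hε ψ hψ)).symm
  · exact ThSurjective.models_iff_of_forall_realize_iff hσ hφ (hεF _ (hιF φ hφ)) fun M =>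
      (hι φ hφ M).trans (hε _ (hιF φ hφ) M).symm

/-- if the bridge `B = ((F₁,T₁),(F₂,T₂),σ)` has both an interpretation `ι`
and an elimination `ε`, then `T₂ ⊨ ψ ↔ ι(εψ)` for every `ψ ∈ F₂`.  If in addition `B`
satisfies (sur), then `(ι, ε)` is a bitranslation: both are translations,
`T₁ ⊨ φ ↔ ε(ιφ)` for all `φ ∈ F₁`, and `T₂ ⊨ ψ ↔ ι(εψ)` for all `ψ ∈ F₂`. -/
theorem statement_3 {L₁ : FirstOrder.Language.{u₁, v₁}} {L₂ : FirstOrder.Language.{u₂, v₂}}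
    {F₁ : Set L₁.Sentence} {F₂ : Set L₂.Sentence} {T₁ : L₁.Theory} {T₂ : L₂.Theory}
    (hF₁ : IsFragment F₁) (hF₂ : IsFragment F₂)
    (σ : Mod T₂ → Mod T₁)
    (ι : L₁.Sentence → L₂.Sentence) (hιF : ∀ φ ∈ F₁, ι φ ∈ F₂)
    (hι : ∀ φ ∈ F₁, ∀ M : Mod T₂, (σ M ⊨ φ ↔ M ⊨ ι φ))
    (ε : L₂.Sentence → L₁.Sentence) (hεF : ∀ ψ ∈ F₂, ε ψ ∈ F₁)
    (hε : ∀ ψ ∈ F₂, ∀ M : Mod T₂, (σ M ⊨ ε ψ ↔ M ⊨ ψ)) :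
    (∀ ψ ∈ F₂, T₂ ⊨ᵇ (ψ ⇔ ι (ε ψ))) ∧
    ((∀ N : Mod T₁, ∃ M : Mod T₂, th F₁ N = th F₁ (σ M)) →
      (∀ φ ∈ F₁, (T₁ ⊨ᵇ φ ↔ T₂ ⊨ᵇ ι φ)) ∧
      (∀ ψ ∈ F₂, (T₂ ⊨ᵇ ψ ↔ T₁ ⊨ᵇ ε ψ)) ∧
      (∀ φ ∈ F₁, T₁ ⊨ᵇ (φ ⇔ ε (ι φ))) ∧
      (∀ ψ ∈ F₂, T₂ ⊨ᵇ (ψ ⇔ ι (ε ψ)))) :=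
  statement_3_general σ ι hιF hι ε hεF hε

end PaperStmt
end

section
/- If a bridge B = ((L₁,T₁),(L₂,T₂),σ) admits an elimination, then it satisfies (mon): for all M, M' ⊨ T₂ with Th_{L₁}(σM) ⊆ Th_{L₁}(σM'), we have Th_{L₂}(M) ⊆ Th_{L₂}(M'). Conversely, if B admits an interpretation ι and satisfies (mon), then B admits an elimination. -/
/-! An elimination carries each `F₂`-sentence true in `M` to an `F₁`-sentence true in `σ M`,
which gives (mon). Conversely, (mon) and an interpretation `ι` make any two models of `T₂` that
disagree on `ψ ∈ F₂` differ on some `ι φ` with `φ ∈ F₁`. Compactness, applied twice, turns this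
separation into an equivalence modulo `T₂` between `ψ` and a finite disjunction of finite
conjunctions of such `ι φ`; the same combination of the `φ` lies in `F₁` and eliminates `ψ`. -/

open FirstOrder Set

universe u v w u₁ v₁ u₂ v₂

namespace PaperStmt

open Language

section Fragment

variable {L : FirstOrder.Language.{u, v}} {F : Set L.Sentence}

theorem IsFragment.foldr_inf_mem (hF : IsFragment F) {l : List L.Sentence}
    (hl : ∀ φ ∈ l, φ ∈ F) : l.foldr (· ⊓ ·) ⊤ ∈ F := by
  induction l with
  | nil => exact hF.1
  | cons φ l ih =>
    rw [List.forall_mem_cons] at hl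
    exact (hF.2.2 _ _ hl.1 (ih hl.2)).1

theorem IsFragment.foldr_sup_mem (hF : IsFragment F) {l : List L.Sentence}
    (hl : ∀ φ ∈ l, φ ∈ F) : l.foldr (· ⊔ ·) ⊥ ∈ F := by
  induction l with
  | nil => exact hF.2.1
  | cons φ l ih =>
    rw [List.forall_mem_cons] at hl
    exact (hF.2.2 _ _ hl.1 (ih hl.2)).2

theorem IsFragment.iInf_mem (hF : IsFragment F) {β : Type*} [Finite β] {f : β → L.Sentence}
    (hf : ∀ b, f b ∈ F) : Formula.iInf f ∈ F :=
  hF.foldr_inf_mem (by simp [hf])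

theorem IsFragment.iSup_mem (hF : IsFragment F) {β : Type*} [Finite β] {f : β → L.Sentence}
    (hf : ∀ b, f b ∈ F) : Formula.iSup f ∈ F :=
  hF.foldr_sup_mem (by simp [hf])

end Fragment

section Separation

variable {L : FirstOrder.Language.{u, v}} {T : L.Theory}

theorem Sentence.realize_iInf {M : Type w} [L.Structure M] {β : Type*} [Finite β]
    {f : β → L.Sentence} : M ⊨ Formula.iInf f ↔ ∀ b, M ⊨ f b :=
  Formula.realize_iInf

theorem Sentence.realize_iSup {M : Type w} [L.Structure M] {β : Type*} [Finite β]
    {f : β → L.Sentence} : M ⊨ Formula.iSup f ↔ ∃ b, M ⊨ f b :=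
  Formula.realize_iSup

theorem exists_finset_subcover {ι : Type*} {φ : L.Sentence} {g : ι → L.Sentence}
    {I : Set ι} (h : ∀ M : Mod T, M ⊨ φ → ∃ i ∈ I, M ⊨ g i) :
    ∃ s : Finset ι, ↑s ⊆ I ∧ ∀ M : Mod T, M ⊨ φ → ∃ i ∈ s, M ⊨ g i := by
  classical
  set A : L.Theory := insert φ T
  have hunsat : ¬ (A ∪ (fun i => (g i).not) '' I).IsSatisfiable := by
    rintro ⟨K⟩
    have hKA : K ⊨ A := K.is_model.mono subset_union_left
    have : K ⊨ T := hKA.mono (subset_insert φ T)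
    obtain ⟨i, hi, hKi⟩ := h (.of T K) (Theory.realize_sentence_of_mem (M := K) A (mem_insert φ T))
    exact (Sentence.realize_not _).1 (Theory.realize_sentence_of_mem (M := K)
      (A ∪ (fun i => (g i).not) '' I) (Or.inr ⟨i, hi, rfl⟩)) hKi
  obtain ⟨T0, hT0, hT0unsat⟩ : ∃ T0 : Finset L.Sentence,
      ↑T0 ⊆ A ∪ (fun i => (g i).not) '' I ∧ ¬ Theory.IsSatisfiable (T0 : L.Theory) := by
    by_contra! hfin
    exact hunsat (Theory.isSatisfiable_iff_isFinitelySatisfiable.2 hfin)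
  obtain ⟨s, hsI, hs⟩ := Finset.subset_set_image_iff.1
    (show ↑(T0.filter (· ∉ A)) ⊆ (fun i => (g i).not) '' I from fun γ hγ => by
      simp only [Finset.coe_filter, mem_ofPred_eq] at hγ
      exact (hT0 hγ.1).resolve_left hγ.2)
  refine ⟨s, hsI, fun M hM => ?_⟩
  by_contra! hMs
  have : (M : Type (max u v)) ⊨ (T0 : L.Theory) := by
    refine (Theory.model_iff _).2 fun γ hγ => ?_
    by_cases hγA : γ ∈ A
    · rcases hγA with rfl | hγT
      · exact hM
      · exact Theory.realize_sentence_of_mem T hγT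
    · obtain ⟨i, hi, rfl⟩ := Finset.mem_image.1 (hs ▸ Finset.mem_filter.2 ⟨hγ, hγA⟩)
      exact (Sentence.realize_not _).2 (hMs i hi)
  exact hT0unsat (Theory.Model.isSatisfiable M)

variable {κ : Type*} {f : κ → L.Sentence} {ψ : L.Sentence}

theorem exists_finset_realize_imp_of_separating
    (hsep : ∀ M N : Mod T, M ⊨ ψ → ¬ N ⊨ ψ → ∃ i, M ⊨ f i ∧ ¬ N ⊨ f i)
    {M : Mod T} (hM : M ⊨ ψ) :
    ∃ t : Finset κ, (∀ i ∈ t, M ⊨ f i) ∧ ∀ N : Mod T, (∀ i ∈ t, N ⊨ f i) → N ⊨ ψ := by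
  obtain ⟨t, htM, ht⟩ := exists_finset_subcover (φ := ψ.not) (g := fun i => (f i).not)
    (I := {i | M ⊨ f i}) fun N hN => by
      obtain ⟨i, hMi, hNi⟩ := hsep M N hM ((Sentence.realize_not _).1 hN)
      exact ⟨i, hMi, (Sentence.realize_not _).2 hNi⟩
  refine ⟨t, htM, fun N hN => by_contra fun hNψ => ?_⟩
  obtain ⟨i, hi, hNi⟩ := ht N ((Sentence.realize_not _).2 hNψ)
  exact (Sentence.realize_not _).1 hNi (hN i hi)

theorem exists_dnf_of_separating
    (hsep : ∀ M N : Mod T, M ⊨ ψ → ¬ N ⊨ ψ → ∃ i, M ⊨ f i ∧ ¬ N ⊨ f i) :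
    ∃ D : Finset (Finset κ), ∀ M : Mod T, M ⊨ ψ ↔ ∃ t ∈ D, ∀ i ∈ t, M ⊨ f i := by
  obtain ⟨D, hDI, hD⟩ := exists_finset_subcover (φ := ψ)
    (g := fun t : Finset κ => Formula.iInf fun i : t => f i)
    (I := {t | ∀ N : Mod T, (∀ i ∈ t, N ⊨ f i) → N ⊨ ψ}) fun M hM => by
      obtain ⟨t, htM, ht⟩ := exists_finset_realize_imp_of_separating hsep hM
      exact ⟨t, ht, Sentence.realize_iInf.2 fun i => htM i i.2⟩
  refine ⟨D, fun M => ⟨fun hM => ?_, fun ⟨t, ht, hMt⟩ => hDI ht M hMt⟩⟩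
  obtain ⟨t, ht, hMt⟩ := hD M hM
  exact ⟨t, ht, fun i hi => Sentence.realize_iInf.1 hMt ⟨i, hi⟩⟩

end Separation

section Bridge

variable {L₁ : FirstOrder.Language.{u₁, v₁}} {L₂ : FirstOrder.Language.{u₂, v₂}}
  {T₁ : L₁.Theory} {T₂ : L₂.Theory}
  (F₁ : Set L₁.Sentence) (F₂ : Set L₂.Sentence) (σ : Mod T₂ → Mod T₁)

def IsElimination (ε : L₂.Sentence → L₁.Sentence) : Prop :=
  (∀ ψ ∈ F₂, ε ψ ∈ F₁) ∧ ∀ ψ ∈ F₂, ∀ M : Mod T₂, (σ M ⊨ ε ψ ↔ M ⊨ ψ)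

def IsThMonotone : Prop :=
  ∀ M M' : Mod T₂, th F₁ (σ M) ⊆ th F₁ (σ M') → th F₂ M ⊆ th F₂ M'

variable {F₁ F₂ σ}

theorem IsElimination.isThMonotone {ε : L₂.Sentence → L₁.Sentence}
    (hε : IsElimination F₁ F₂ σ ε) : IsThMonotone F₁ F₂ σ := by
  rintro M M' hsub ψ ⟨hψF, hψ⟩
  exact ⟨hψF, (hε.2 ψ hψF M').1 (hsub ⟨hε.1 ψ hψF, (hε.2 ψ hψF M).2 hψ⟩).2⟩

theorem IsThMonotone.exists_separating {ι : L₁.Sentence → L₂.Sentence}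
    (hι : ∀ φ ∈ F₁, ∀ M : Mod T₂, (σ M ⊨ φ ↔ M ⊨ ι φ)) (hmon : IsThMonotone F₁ F₂ σ)
    {ψ : L₂.Sentence} (hψ : ψ ∈ F₂) (M N : Mod T₂) (hM : M ⊨ ψ) (hN : ¬ N ⊨ ψ) :
    ∃ φ : F₁, M ⊨ ι φ ∧ ¬ N ⊨ ι φ := by
  by_contra! hsep
  refine hN (hmon M N (fun φ ⟨hφF, hMφ⟩ => ⟨hφF, ?_⟩) ⟨hψ, hM⟩).2
  exact (hι φ hφF N).2 (hsep ⟨φ, hφF⟩ ((hι φ hφF M).1 hMφ))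

theorem IsThMonotone.exists_isElimination (hF₁ : IsFragment F₁) {ι : L₁.Sentence → L₂.Sentence}
    (hι : ∀ φ ∈ F₁, ∀ M : Mod T₂, (σ M ⊨ φ ↔ M ⊨ ι φ)) (hmon : IsThMonotone F₁ F₂ σ) :
    ∃ ε, IsElimination F₁ F₂ σ ε := by
  have exists_eliminant : ∀ ψ ∈ F₂, ∃ χ ∈ F₁, ∀ M : Mod T₂, (σ M ⊨ χ ↔ M ⊨ ψ) := by
    intro ψ hψ
    obtain ⟨D, hD⟩ := exists_dnf_of_separating (f := fun φ : F₁ => ι φ)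
      (hmon.exists_separating hι hψ)
    refine ⟨Formula.iSup fun t : D => Formula.iInf fun φ : t.1 => (φ.1 : L₁.Sentence),
      hF₁.iSup_mem fun t => hF₁.iInf_mem fun φ => φ.1.2, fun M => ?_⟩
    simp [Sentence.realize_iSup, Sentence.realize_iInf, hD M, hι _ (Subtype.prop _) M]
  choose! ε hεF hε using exists_eliminant
  exact ⟨ε, hεF, hε⟩

end Bridge

theorem statement_5_general {L₁ : FirstOrder.Language.{u₁, v₁}} {L₂ : FirstOrder.Language.{u₂, v₂}}
    {F₁ : Set L₁.Sentence} {F₂ : Set L₂.Sentence} {T₁ : L₁.Theory} {T₂ : L₂.Theory}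
    (hF₁ : IsFragment F₁)
    (σ : Mod T₂ → Mod T₁) :
    ((∃ ε : L₂.Sentence → L₁.Sentence, (∀ ψ ∈ F₂, ε ψ ∈ F₁) ∧
        ∀ ψ ∈ F₂, ∀ M : Mod T₂, (σ M ⊨ ε ψ ↔ M ⊨ ψ)) →
      ∀ M M' : Mod T₂, th F₁ (σ M) ⊆ th F₁ (σ M') → th F₂ M ⊆ th F₂ M') ∧
    ((∃ ι : L₁.Sentence → L₂.Sentence, (∀ φ ∈ F₁, ι φ ∈ F₂) ∧
        ∀ φ ∈ F₁, ∀ M : Mod T₂, (σ M ⊨ φ ↔ M ⊨ ι φ)) →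
      (∀ M M' : Mod T₂, th F₁ (σ M) ⊆ th F₁ (σ M') → th F₂ M ⊆ th F₂ M') →
      ∃ ε : L₂.Sentence → L₁.Sentence, (∀ ψ ∈ F₂, ε ψ ∈ F₁) ∧
        ∀ ψ ∈ F₂, ∀ M : Mod T₂, (σ M ⊨ ε ψ ↔ M ⊨ ψ)) :=
  ⟨fun ⟨_, hε⟩ => IsElimination.isThMonotone hε,
    fun ⟨_, _, hι⟩ hmon => IsThMonotone.exists_isElimination hF₁ hι hmon⟩

/-- a bridge admitting an elimination satisfies (mon); conversely a bridge
admitting an interpretation and satisfying (mon) admits an elimination. -/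
theorem statement_5 {L₁ : FirstOrder.Language.{u₁, v₁}} {L₂ : FirstOrder.Language.{u₂, v₂}}
    {F₁ : Set L₁.Sentence} {F₂ : Set L₂.Sentence} {T₁ : L₁.Theory} {T₂ : L₂.Theory}
    (hF₁ : IsFragment F₁) (hF₂ : IsFragment F₂)
    (σ : Mod T₂ → Mod T₁) :
    ((∃ ε : L₂.Sentence → L₁.Sentence, (∀ ψ ∈ F₂, ε ψ ∈ F₁) ∧
        ∀ ψ ∈ F₂, ∀ M : Mod T₂, (σ M ⊨ ε ψ ↔ M ⊨ ψ)) →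
      ∀ M M' : Mod T₂, th F₁ (σ M) ⊆ th F₁ (σ M') → th F₂ M ⊆ th F₂ M') ∧
    ((∃ ι : L₁.Sentence → L₂.Sentence, (∀ φ ∈ F₁, ι φ ∈ F₂) ∧
        ∀ φ ∈ F₁, ∀ M : Mod T₂, (σ M ⊨ φ ↔ M ⊨ ι φ)) →
      (∀ M M' : Mod T₂, th F₁ (σ M) ⊆ th F₁ (σ M') → th F₂ M ⊆ th F₂ M') →
      ∃ ε : L₂.Sentence → L₁.Sentence, (∀ ψ ∈ F₂, ε ψ ∈ F₁) ∧
        ∀ ψ ∈ F₂, ∀ M : Mod T₂, (σ M ⊨ ε ψ ↔ M ⊨ ψ)) :=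
  statement_5_general hF₁ σ
end PaperStmt
end

section
/- Let T be an 𝔏-theory, L an 𝔏-fragment, and M an 𝔏-structure such that M ⊨ T^⊢ ∩ L. Then there exists a model N ⊨ T such that M ⊨ Th_L(N), i.e. every sentence of L true in N is true in M. -/
open FirstOrder Set

universe u v w u₁ v₁ u₂ v₂

namespace PaperStmt

/-- if `M` is a structure satisfying `T^⊢ ∩ F` (every `F`-consequence of `T`),
then there exists a model `N ⊨ T` such that every sentence of `F` true in `N` is true in `M`,
i.e. `M ⊨ Th_F(N)`. -/
theorem statement_6 {L : FirstOrder.Language.{u, v}} (T : L.Theory) (F : Set L.Sentence)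
    (hF : IsFragment F) (M : Type w) [L.Structure M] [Nonempty M]
    (hM : ∀ φ ∈ F, T ⊨ᵇ φ → M ⊨ φ) :
    ∃ N : Mod T, ∀ φ ∈ F, N ⊨ φ → M ⊨ φ := by
  classical
  obtain ⟨htop, hbot, hclose⟩ := hF
  -- the fragment is closed under finite disjunctions
  have foldF : ∀ l : List L.Sentence, (∀ φ ∈ l, φ ∈ F) →
      (l.foldr (· ⊔ ·) ⊥ : L.Sentence) ∈ F := by
    intro l
    induction l with
    | nil => intro _; exact hbot
    | cons φ l ih =>
      intro h
      exact (hclose φ (l.foldr (· ⊔ ·) ⊥) (h φ List.mem_cons_self)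
        (ih fun ψ hψ => h ψ (List.mem_cons_of_mem φ hψ))).2
  -- key step: finitely many `F`-sentences false in `M` can be simultaneously
  -- falsified in some model of `T`
  have key : ∀ l : List L.Sentence, (∀ φ ∈ l, φ ∈ F ∧ ¬ M ⊨ φ) →
      ∃ N : Mod T, ∀ φ ∈ l, ¬ N ⊨ φ := by
    intro l hl
    by_contra h
    push_neg at h
    have hT : T ⊨ᵇ (l.foldr (· ⊔ ·) ⊥ : L.Sentence) := by
      rw [FirstOrder.Language.Theory.models_sentence_iff]
      intro N
      obtain ⟨φ, hφl, hφ⟩ := h N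
      simp only [FirstOrder.Language.Sentence.Realize, FirstOrder.Language.Formula.Realize,
        FirstOrder.Language.BoundedFormula.realize_foldr_sup]
      exact ⟨φ, hφl, hφ⟩
    have hMψ : M ⊨ (l.foldr (· ⊔ ·) ⊥ : L.Sentence) :=
      hM _ (foldF l fun φ hφ => (hl φ hφ).1) hT
    simp only [FirstOrder.Language.Sentence.Realize, FirstOrder.Language.Formula.Realize,
      FirstOrder.Language.BoundedFormula.realize_foldr_sup] at hMψ
    obtain ⟨φ, hφl, hφ⟩ := hMψ
    exact (hl φ hφl).2 hφ
  -- the auxiliary theory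
  set S : L.Theory := {χ | ∃ φ : L.Sentence, φ ∈ F ∧ ¬ M ⊨ φ ∧ χ = FirstOrder.Language.Formula.not φ}
    with hS
  have hinj : Function.Injective (FirstOrder.Language.Formula.not : L.Sentence → L.Sentence) := by
    intro a b h
    injection h
  have hsat : (T ∪ S).IsSatisfiable := by
    rw [FirstOrder.Language.Theory.isSatisfiable_iff_isFinitelySatisfiable]
    intro T0 hT0
    have hfin : {φ : L.Sentence | φ ∈ F ∧ ¬ M ⊨ φ ∧
        FirstOrder.Language.Formula.not φ ∈ (T0 : L.Theory)}.Finite := by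
      apply (T0.finite_toSet.preimage hinj.injOn).subset
      intro φ hφ
      exact hφ.2.2
    obtain ⟨N, hN⟩ := key hfin.toFinset.toList (by
      intro φ hφ
      rw [Finset.mem_toList, Set.Finite.mem_toFinset] at hφ
      exact ⟨hφ.1, hφ.2.1⟩)
    have hNT0 : N ⊨ (T0 : L.Theory) := by
      rw [FirstOrder.Language.Theory.model_iff]
      intro χ hχ
      rcases hT0 hχ with hχT | hχS
      · exact N.is_model.realize_of_mem χ hχT
      · obtain ⟨φ, hφF, hφM, rfl⟩ := hχS
        have hφl : φ ∈ hfin.toFinset.toList := by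
          rw [Finset.mem_toList, Set.Finite.mem_toFinset]
          exact ⟨hφF, hφM, hχ⟩
        have := hN φ hφl
        rwa [FirstOrder.Language.Sentence.Realize, FirstOrder.Language.Formula.realize_not]
    exact FirstOrder.Language.Theory.Model.isSatisfiable N
  obtain ⟨N0⟩ := hsat
  refine ⟨(N0.is_model.mono Set.subset_union_left).bundled, ?_⟩
  intro φ hφF hNφ
  by_contra hMφ
  have hmem : FirstOrder.Language.Formula.not φ ∈ T ∪ S :=
    Set.mem_union_right _ ⟨φ, hφF, hMφ, rfl⟩
  have hnot : N0 ⊨ FirstOrder.Language.Formula.not φ :=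
    N0.is_model.realize_of_mem _ hmem
  rw [FirstOrder.Language.Sentence.Realize, FirstOrder.Language.Formula.realize_not] at hnot
  exact hnot hNφ

end PaperStmt
end

section
/- Let B ⊑ B̂ be a fragment extension of bridges such that B̂ satisfies (sur) and B satisfies (mon). Then B ⊑ B̂ satisfies (wm): for all M ⊨ T₂ and N ⊨ T₁ with Th_{L₁}(N) ⊆ Th_{L₁}(σM), there exists M' ⊨ T₂ with Th_{L̂₁}(σM') = Th_{L̂₁}(N) and Th_{L₂}(M') ⊆ Th_{L₂}(M). -/
open FirstOrder Set

universe u v w u₁ v₁ u₂ v₂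

namespace PaperStmt

theorem th_eq_of_subset {L : FirstOrder.Language.{u, v}} {T T' : L.Theory}
    {F G : Set L.Sentence} (hFG : F ⊆ G) {M : Mod T} {N : Mod T'}
    (hMN : th G M = th G N) : th F M = th F N := by
  ext φ
  refine and_congr_right fun hφ => ?_
  simpa only [th, mem_ofPred_eq, hFG hφ, true_and] using Set.ext_iff.mp hMN φ

theorem statement_8_general {L₁ : FirstOrder.Language.{u₁, v₁}} {L₂ : FirstOrder.Language.{u₂, v₂}}
    {F₁ Fh₁ : Set L₁.Sentence} {F₂ : Set L₂.Sentence} {T₁ : L₁.Theory} {T₂ : L₂.Theory}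
    (hsub₁ : F₁ ⊆ Fh₁)
    (σ : Mod T₂ → Mod T₁)
    (hsur : ∀ N : Mod T₁, ∃ M : Mod T₂, th Fh₁ N = th Fh₁ (σ M))
    (hmon : ∀ M M' : Mod T₂, th F₁ (σ M) ⊆ th F₁ (σ M') → th F₂ M ⊆ th F₂ M') :
    ∀ (M : Mod T₂) (N : Mod T₁), th F₁ N ⊆ th F₁ (σ M) →
      ∃ M' : Mod T₂, th Fh₁ (σ M') = th Fh₁ N ∧ th F₂ M' ⊆ th F₂ M := by
  intro M N hNM
  obtain ⟨M', hM'⟩ := hsur N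
  refine ⟨M', hM'.symm, hmon M' M ?_⟩
  rwa [← th_eq_of_subset hsub₁ hM']

/-- a fragment extension `B ⊑ B̂` of bridges such that `B̂` satisfies (sur)
and `B` satisfies (mon) satisfies (wm). -/
theorem statement_8 {L₁ : FirstOrder.Language.{u₁, v₁}} {L₂ : FirstOrder.Language.{u₂, v₂}}
    {F₁ Fh₁ : Set L₁.Sentence} {F₂ Fh₂ : Set L₂.Sentence} {T₁ : L₁.Theory} {T₂ : L₂.Theory}
    (hF₁ : IsFragment F₁) (hF₂ : IsFragment F₂) (hFh₁ : IsFragment Fh₁) (hFh₂ : IsFragment Fh₂)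
    (hsub₁ : F₁ ⊆ Fh₁) (hsub₂ : F₂ ⊆ Fh₂)
    (σ : Mod T₂ → Mod T₁)
    (hsur : ∀ N : Mod T₁, ∃ M : Mod T₂, th Fh₁ N = th Fh₁ (σ M))
    (hmon : ∀ M M' : Mod T₂, th F₁ (σ M) ⊆ th F₁ (σ M') → th F₂ M ⊆ th F₂ M') :
    ∀ (M : Mod T₂) (N : Mod T₁), th F₁ N ⊆ th F₁ (σ M) →
      ∃ M' : Mod T₂, th Fh₁ (σ M') = th Fh₁ N ∧ th F₂ M' ⊆ th F₂ M :=
  statement_8_general hsub₁ σ hsur hmon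

end PaperStmt
end

section
/- Let B = ((L₁,T₁),(L₂,T₂),σ) be a bridge satisfying (mon). Then the bridge B̄ = ((L̄₁,T₁),(L̄₂,T₂),σ) also satisfies (mon), where L̄ᵢ is the smallest fragment containing Lᵢ ∪ {¬φ : φ ∈ Lᵢ}. -/
open FirstOrder Set

universe u v w u₁ v₁ u₂ v₂

namespace PaperStmt

/-- The smallest fragment containing a given set of sentences. -/
def fragmentClosure {L : FirstOrder.Language.{u, v}} (S : Set L.Sentence) : Set L.Sentence :=
  ⋂₀ {F : Set L.Sentence | IsFragment F ∧ S ⊆ F}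

/-- `L̄`: the smallest fragment containing `L ∪ ¬L`. -/
def negClosure {L : FirstOrder.Language.{u, v}} (F : Set L.Sentence) : Set L.Sentence :=
  fragmentClosure (F ∪ (fun φ => ∼φ) '' F)


/- Negations make `Th_{F̄}(M) ⊆ Th_{F̄}(M')` force `M` and `M'` to agree on `F`, and conversely
agreement on `F` gives agreement on `F ∪ ¬F`, which propagates to `F̄` because the sentences whose
truth transfers from `M` to `M'` form a fragment. So on both sides of the bridge the inclusions of
`F̄`-theories are exactly the equalities of `F`-theories, and (mon) applied in both directions
transports such an equality from `σ M, σ M'` to `M, M'`. -/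

section

open FirstOrder.Language

variable {L : FirstOrder.Language.{u, v}}

lemma subset_negClosure (F : Set L.Sentence) : F ∪ (fun φ => ∼φ) '' F ⊆ negClosure F :=
  fun _ hφ => Set.mem_sInter.2 fun _ hG => hG.2 hφ

lemma negClosure_subset {F G : Set L.Sentence} (hG : IsFragment G)
    (h : F ∪ (fun φ => ∼φ) '' F ⊆ G) : negClosure F ⊆ G :=
  Set.sInter_subset_of_mem ⟨hG, h⟩

lemma isFragment_setOf_realize_imp (M M' : Type*) [L.Structure M] [L.Structure M'] :
    IsFragment {φ : L.Sentence | M ⊨ φ → M' ⊨ φ} := by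
  refine ⟨fun _ => Sentence.realize_top M', fun h => absurd h (Sentence.not_realize_bot M),
    fun φ ψ hφ hψ => ⟨?_, ?_⟩⟩
  · simp only [mem_ofPred_eq, Sentence.realize_inf]
    exact And.imp hφ hψ
  · simp only [mem_ofPred_eq, Sentence.realize_sup]
    exact Or.imp hφ hψ

lemma th_eq_iff {T : L.Theory} {F : Set L.Sentence} {M M' : Mod T} :
    th F M = th F M' ↔ ∀ φ ∈ F, (M ⊨ φ ↔ M' ⊨ φ) := by
  simp only [th, Set.ext_iff, mem_ofPred_eq, and_congr_right_iff]

lemma th_negClosure_subset_iff {T : L.Theory} {F : Set L.Sentence} {M M' : Mod T} :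
    th (negClosure F) M ⊆ th (negClosure F) M' ↔ th F M = th F M' := by
  rw [th_eq_iff]
  constructor
  · intro h φ hφ
    have realize_of_mem {ψ : L.Sentence} (hψ : ψ ∈ F ∪ (fun φ => ∼φ) '' F) (hM : M ⊨ ψ) :
        M' ⊨ ψ :=
      (h ⟨subset_negClosure F hψ, hM⟩).2
    refine ⟨realize_of_mem (Or.inl hφ), fun hM' => ?_⟩
    by_contra hM
    exact realize_of_mem (Or.inr ⟨φ, hφ, rfl⟩) hM hM'
  · intro h
    have hsub : negClosure F ⊆ {φ | M ⊨ φ → M' ⊨ φ} := by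
      refine negClosure_subset (isFragment_setOf_realize_imp M M') ?_
      rintro _ (hφ | ⟨φ, hφ, rfl⟩)
      · exact (h _ hφ).1
      · simpa only [mem_ofPred_eq, Sentence.realize_not] using mt (h φ hφ).2
    exact fun φ hφ => ⟨hφ.1, hsub hφ.1 hφ.2⟩

end

theorem statement_9_general {L₁ : FirstOrder.Language.{u₁, v₁}} {L₂ : FirstOrder.Language.{u₂, v₂}}
    {F₁ : Set L₁.Sentence} {F₂ : Set L₂.Sentence} {T₁ : L₁.Theory} {T₂ : L₂.Theory}
    (σ : Mod T₂ → Mod T₁)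
    (hmon : ∀ M M' : Mod T₂, th F₁ (σ M) ⊆ th F₁ (σ M') → th F₂ M ⊆ th F₂ M') :
    ∀ M M' : Mod T₂, th (negClosure F₁) (σ M) ⊆ th (negClosure F₁) (σ M') →
      th (negClosure F₂) M ⊆ th (negClosure F₂) M' := by
  intro M M' h
  rw [th_negClosure_subset_iff] at h ⊢
  exact (hmon M M' h.subset).antisymm (hmon M' M h.symm.subset)

/-- if a bridge `((F₁,T₁),(F₂,T₂),σ)` satisfies (mon), then so does the bridge
`((F̄₁,T₁),(F̄₂,T₂),σ)`, where `F̄ᵢ` is the smallest fragment containing `Fᵢ ∪ ¬Fᵢ`. -/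
theorem statement_9 {L₁ : FirstOrder.Language.{u₁, v₁}} {L₂ : FirstOrder.Language.{u₂, v₂}}
    {F₁ : Set L₁.Sentence} {F₂ : Set L₂.Sentence} {T₁ : L₁.Theory} {T₂ : L₂.Theory}
    (hF₁ : IsFragment F₁) (hF₂ : IsFragment F₂)
    (σ : Mod T₂ → Mod T₁)
    (hmon : ∀ M M' : Mod T₂, th F₁ (σ M) ⊆ th F₁ (σ M') → th F₂ M ⊆ th F₂ M') :
    ∀ M M' : Mod T₂, th (negClosure F₁) (σ M) ⊆ th (negClosure F₁) (σ M') →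
      th (negClosure F₂) M ⊆ th (negClosure F₂) M' :=
  statement_9_general σ hmon

end PaperStmt
end

section
/- Let T, S be 𝔏-theories and L an 𝔏-fragment such that ¬ρ ∈ L for every ρ ∈ S. Then ((T^⊢ ∩ L) ∪ S)^⊢ ∩ L = (T ∪ S)^⊢ ∩ L. -/
open FirstOrder Set

universe u v w u₁ v₁ u₂ v₂

namespace PaperStmt

/-- Finite disjunctions stay in a fragment. -/
lemma foldr_sup_mem_fragment {L : FirstOrder.Language.{u, v}} {F : Set L.Sentence}
    (hF : IsFragment F) (l : List L.Sentence) (h : ∀ φ ∈ l, φ ∈ F) :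
    (l.foldr (· ⊔ ·) (⊥ : L.Sentence)) ∈ F := by
  induction l with
  | nil => exact hF.2.1
  | cons φ l ih =>
    exact (hF.2.2 φ _ (h φ List.mem_cons_self)
      (ih fun ψ hψ => h ψ (List.mem_cons_of_mem _ hψ))).2

lemma realize_foldr_sup_sentence {L : FirstOrder.Language.{u, v}} {M : Type w}
    [L.Structure M] (l : List L.Sentence) :
    M ⊨ (l.foldr (· ⊔ ·) (⊥ : L.Sentence)) ↔ ∃ ψ ∈ l, M ⊨ ψ := by
  simpa [Language.Sentence.Realize, Language.Formula.Realize] using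
    Language.BoundedFormula.realize_foldr_sup l (default : Empty → M) default

/-- let `T, S` be theories and `F` a fragment with `¬ρ ∈ F` for every `ρ ∈ S`.
Then `((T^⊢ ∩ F) ∪ S)^⊢ ∩ F = (T ∪ S)^⊢ ∩ F`. -/
theorem statement_10 {L : FirstOrder.Language.{u, v}} (T S : L.Theory) (F : Set L.Sentence)
    (hF : IsFragment F) (hS : ∀ ρ ∈ S, (∼ρ) ∈ F) :
    cons (cons T F ∪ S) F = cons (T ∪ S) F := by
  ext φ
  simp only [cons, Set.mem_setOf_eq]
  constructor
  · rintro ⟨hφF, hφ⟩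
    refine ⟨hφF, Language.Theory.models_sentence_iff.2 fun M => ?_⟩
    have hMTS : M ⊨ T ∪ S := M.is_model
    have hM' : M ⊨ cons T F ∪ S := by
      constructor
      intro ψ hψ
      rcases hψ with hψ | hψ
      · exact Language.Theory.models_sentence_iff.1 hψ.2
          (hMTS.mono Set.subset_union_left).bundled
      · exact hMTS.realize_of_mem ψ (Set.mem_union_right _ hψ)
    exact Language.Theory.models_sentence_iff.1 hφ hM'.bundled
  · rintro ⟨hφF, hφ⟩
    refine ⟨hφF, Language.Theory.models_sentence_iff.2 fun M => ?_⟩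
    by_contra hMφ
    have hM : M ⊨ cons T F ∪ S := M.is_model
    -- Ψ : sentences in F false in M
    set Ψ : Set L.Sentence := {ψ | ψ ∈ F ∧ ¬ M ⊨ ψ} with hΨdef
    -- The theory T ∪ ∼'' Ψ is finitely satisfiable
    have hnotinj : Function.Injective (Language.Formula.not : L.Sentence → L.Sentence) := by
      intro a b hab
      simpa [Language.BoundedFormula.not] using hab
    have hfin : Language.Theory.IsFinitelySatisfiable (T ∪ (Language.Formula.not '' Ψ)) := by
      intro Δ₀ hΔ₀
      have hΨ'fin : (Ψ ∩ (Language.Formula.not ⁻¹' ↑Δ₀)).Finite :=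
        Set.Finite.subset (Δ₀.finite_toSet.preimage hnotinj.injOn) Set.inter_subset_right
      set l : List L.Sentence := hΨ'fin.toFinset.toList with hl
      have hlmem : ∀ ψ, ψ ∈ l ↔ ψ ∈ Ψ ∩ (Language.Formula.not ⁻¹' ↑Δ₀) := by
        intro ψ; rw [hl, Finset.mem_toList, Set.Finite.mem_toFinset]
      set χ : L.Sentence := l.foldr (· ⊔ ·) ⊥ with hχ
      have hχF : χ ∈ F := foldr_sup_mem_fragment hF l fun ψ hψ => ((hlmem ψ).1 hψ).1.1
      -- T does not model χ
      have hTχ : ¬ (T ⊨ᵇ χ) := by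
        intro h
        have hMχ : M ⊨ χ := hM.realize_of_mem χ (Set.mem_union_left _ ⟨hχF, h⟩)
        obtain ⟨ψ, hψl, hψr⟩ := (realize_foldr_sup_sentence l).1 hMχ
        exact ((hlmem ψ).1 hψl).1.2 hψr
      rw [Language.Theory.models_sentence_iff] at hTχ
      push_neg at hTχ
      obtain ⟨N, hNχ⟩ := hTχ
      refine ⟨Language.Theory.Model.bundled (M := N) ?_⟩
      constructor
      intro χ' hχ'
      rcases hΔ₀ hχ' with hχ'T | ⟨ψ, hψΨ, rfl⟩
      · exact N.is_model.realize_of_mem _ hχ'T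
      · rw [Language.Sentence.realize_not]
        intro hNψ
        exact hNχ ((realize_foldr_sup_sentence l).2 ⟨ψ, (hlmem ψ).2 ⟨hψΨ, hχ'⟩, hNψ⟩)
    obtain ⟨N⟩ := Language.Theory.isSatisfiable_iff_isFinitelySatisfiable.2 hfin
    have hN : N ⊨ T ∪ (Language.Formula.not '' Ψ) := N.is_model
    have hNTS : N ⊨ T ∪ S := by
      constructor
      intro ρ hρ
      rcases hρ with hρ | hρ
      · exact hN.realize_of_mem ρ (Set.mem_union_left _ hρ)
      · have hMρ : M ⊨ ρ := hM.realize_of_mem ρ (Set.mem_union_right _ hρ)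
        have : (∼ρ) ∈ Ψ := ⟨hS ρ hρ, by rw [Language.Sentence.realize_not]; exact not_not.2 hMρ⟩
        have := hN.realize_of_mem _ (Set.mem_union_right _ (Set.mem_image_of_mem _ this))
        rw [Language.Sentence.realize_not, Language.Sentence.realize_not] at this
        exact not_not.1 this
    have hNφ : N ⊨ φ := Language.Theory.models_sentence_iff.1 hφ
      hNTS.bundled
    have : (∼φ) ∈ Language.Formula.not '' Ψ := Set.mem_image_of_mem _ ⟨hφF, hMφ⟩
    have := hN.realize_of_mem _ (Set.mem_union_right _ this)
    rw [Language.Sentence.realize_not] at this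
    exact this hNφ

end PaperStmt
end

section
/- Let T be an 𝔏-theory, (ρₙ)ₙ a sequence of 𝔏-sentences, and define T₀ = (T ∪ {ρₙ : n ∈ ℕ})^⊢ and Tₙ = (T ∪ {ρ₁,…,ρₙ₋₁, ¬ρₙ})^⊢ for n ∈ ℕ, T_{>0} = ⋂_{n≥1} Tₙ. Then an 𝔏-structure M is a model of T_{>0} ∪ T₀ if and only if M ⊨ T_{>m} for every m ≥ 0 (where T_{>m} = ⋂_{n>m} Tₙ), i.e. M ⊨ T_{≫0} := ⋃_{m} ⋂_{n≥m} Tₙ. -/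
open FirstOrder Set

universe u v w u₁ v₁ u₂ v₂

namespace PaperStmt

/-- The deductive closure of a theory `T`, i.e. the set of all its consequences. -/
def deductiveClosure {L : FirstOrder.Language.{u, v}} (T : L.Theory) : L.Theory :=
  {φ | T ⊨ᵇ φ}

/-!
Every `Tₙ` with `n > m + 1` contains `T_{>m+1}`, while `T_{m+1}` contains `¬ρ_{m+1}`; hence
`ρ_{m+1} → φ` lies in `T_{>m}` for every `φ ∈ T_{>m+1}`. So a model of `T_{>0}` satisfying all
`ρₖ` climbs to every `T_{>m}`. Conversely `T_{>m}` contains `T` and `ρ₁, …, ρₘ`, so a model of all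
`T_{>m}` satisfies `T ∪ {ρₖ : k ≥ 1}` and hence its deductive closure `T₀`.
-/

open Language Theory

section

variable {L : FirstOrder.Language.{u, v}}

theorem subset_deductiveClosure (S : L.Theory) : S ⊆ deductiveClosure S :=
  fun _ => models_sentence_of_mem

theorem model_deductiveClosure_iff {S : L.Theory} {M : Type w} [L.Structure M] [Nonempty M] :
    M ⊨ deductiveClosure S ↔ M ⊨ S :=
  ⟨fun h => h.mono (subset_deductiveClosure S),
    fun _ => (model_iff _).2 fun _ hφ => ModelsBoundedFormula.realize_sentence hφ M⟩

theorem imp_mem_deductiveClosure_of_mem {S : L.Theory} {φ : L.Sentence} (ψ : L.Sentence)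
    (h : φ ∈ deductiveClosure S) : ψ ⟹ φ ∈ deductiveClosure S :=
  models_sentence_iff.2 fun N _ => h.realize_sentence N

theorem imp_mem_deductiveClosure_of_not_mem {S : L.Theory} {ψ : L.Sentence} (φ : L.Sentence)
    (h : ∼ψ ∈ S) : ψ ⟹ φ ∈ deductiveClosure S :=
  models_sentence_iff.2 fun N hψ => absurd hψ (S.realize_sentence_of_mem (M := N) h)

variable (T : L.Theory) (ρ : ℕ → L.Sentence)

/-- The theory `Tₙ = (T ∪ {ρ₁, …, ρₙ₋₁, ¬ρₙ})^⊢`. -/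
def stageTheory (n : ℕ) : L.Theory :=
  deductiveClosure (T ∪ ρ '' {k | 1 ≤ k ∧ k < n} ∪ {∼(ρ n)})

/-- The theory `T_{>m} = ⋂_{n > m} Tₙ`. -/
def tailTheory (m : ℕ) : L.Theory :=
  ⋂ n ∈ {n : ℕ | m < n}, stageTheory T ρ n

variable {T ρ}

theorem subset_tailTheory (m : ℕ) : T ⊆ tailTheory T ρ m := fun _ hφ =>
  mem_iInter₂.2 fun _ _ => subset_deductiveClosure _ (Or.inl (Or.inl hφ))

theorem mem_tailTheory_of_le {k m : ℕ} (hk : 1 ≤ k) (hkm : k ≤ m) : ρ k ∈ tailTheory T ρ m :=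
  mem_iInter₂.2 fun _ hn =>
    subset_deductiveClosure _ (Or.inl (Or.inr ⟨k, ⟨hk, lt_of_le_of_lt hkm hn⟩, rfl⟩))

theorem imp_mem_tailTheory_of_mem_tailTheory_succ {m : ℕ} {φ : L.Sentence}
    (hφ : φ ∈ tailTheory T ρ (m + 1)) : ρ (m + 1) ⟹ φ ∈ tailTheory T ρ m := by
  refine mem_iInter₂.2 fun n (hn : m < n) => ?_
  rcases (Nat.succ_le_of_lt hn).eq_or_lt with rfl | hlt
  · exact imp_mem_deductiveClosure_of_not_mem φ (Or.inr rfl)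
  · exact imp_mem_deductiveClosure_of_mem _ (mem_iInter₂.1 hφ n hlt)

theorem model_tailTheory_succ {M : Type w} [L.Structure M] {m : ℕ}
    (hM : M ⊨ tailTheory T ρ m) (hρ : M ⊨ ρ (m + 1)) : M ⊨ tailTheory T ρ (m + 1) :=
  (model_iff _).2 fun _ hφ =>
    hM.realize_of_mem _ (imp_mem_tailTheory_of_mem_tailTheory_succ hφ) hρ

theorem model_tailTheory_of_model_zero {M : Type w} [L.Structure M]
    (h0 : M ⊨ tailTheory T ρ 0) (hρ : ∀ k, 1 ≤ k → M ⊨ ρ k) (m : ℕ) :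
    M ⊨ tailTheory T ρ m := by
  induction m with
  | zero => exact h0
  | succ m ih => exact model_tailTheory_succ ih (hρ (m + 1) m.succ_pos)

end

/-- with `T₀ = (T ∪ {ρₙ : n ≥ 1})^⊢`, `Tₙ = (T ∪ {ρ₁,…,ρₙ₋₁,¬ρₙ})^⊢`
and `T_{>m} = ⋂_{n>m} Tₙ`, a structure `M` models `T_{>0} ∪ T₀` if and only if it models
`T_{>m}` for every `m ≥ 0` (i.e. `M ⊨ T_{≫0}`). -/
theorem statement_11 {L : FirstOrder.Language.{u, v}} (T : L.Theory) (ρ : ℕ → L.Sentence)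
    (M : Type w) [L.Structure M] [Nonempty M] :
    (M ⊨ ((⋂ n ∈ {n : ℕ | 1 ≤ n},
          deductiveClosure (T ∪ (ρ '' {k | 1 ≤ k ∧ k < n}) ∪ {∼(ρ n)})) ∪
        deductiveClosure (T ∪ ρ '' {k | 1 ≤ k}) : L.Theory)) ↔
      ∀ m : ℕ, M ⊨ (⋂ n ∈ {n : ℕ | m < n},
          deductiveClosure (T ∪ (ρ '' {k | 1 ≤ k ∧ k < n}) ∪ {∼(ρ n)}) : L.Theory) := by
  change M ⊨ tailTheory T ρ 0 ∪ deductiveClosure (T ∪ ρ '' {k | 1 ≤ k}) ↔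
    ∀ m, M ⊨ tailTheory T ρ m
  rw [model_union_iff, model_deductiveClosure_iff, model_union_iff]
  constructor
  · rintro ⟨h0, -, hρ⟩
    exact model_tailTheory_of_model_zero h0 fun k hk => hρ.realize_of_mem _ ⟨k, hk, rfl⟩
  · intro h
    refine ⟨h 0, (h 0).mono (subset_tailTheory 0), (model_iff _).2 ?_⟩
    rintro _ ⟨k, hk, rfl⟩
    exact (h k).realize_of_mem _ (mem_tailTheory_of_le hk le_rfl)

end PaperStmt
end

section
/- Let T be an 𝔏-theory, L an 𝔏-fragment, and (ρₙ)ₙ a sequence of sentences with ρₙ, ¬ρₙ ∈ L for all n. Write Σ = T^⊢ ∩ L, Σ₀ = (Σ ∪ {ρₙ : n})^⊢ ∩ L, Σₙ = (Σ ∪ {ρ₁,…,ρₙ₋₁,¬ρₙ})^⊢ ∩ L, and Σ_{>0} = ⋂_{n≥1} Σₙ. Then Σ = Σ₀ ∩ Σ_{>0}. -/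
/-!
The argument is semantic. A model of `Σ` either satisfies every `ρₖ`, and then it is a model of
`Σ ∪ {ρₖ : k ≥ 1}`, hence of every sentence of `Σ₀`; or there is a first `n` with `ρₙ` false, and
then it is a model of `Σ ∪ {ρ₁, …, ρₙ₋₁, ¬ρₙ}`, hence of every sentence of `Σₙ`. So a sentence of
`Σ₀ ∩ Σ_{>0}` holds in every model of `Σ`, and thus in every model of `T`.
-/

open FirstOrder Set

universe u v w u₁ v₁ u₂ v₂

theorem Nat.forall_or_exists_first_not (P : ℕ → Prop) (m : ℕ) :
    (∀ k, m ≤ k → P k) ∨ ∃ n, m ≤ n ∧ ¬P n ∧ ∀ k, m ≤ k → k < n → P k := by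
  classical
  by_cases hall : ∀ k, m ≤ k → P k
  · exact .inl hall
  · push Not at hall
    obtain ⟨hmn, hn⟩ := Nat.find_spec hall
    refine .inr ⟨Nat.find hall, hmn, hn, fun k hmk hk => ?_⟩
    by_contra hPk
    exact Nat.find_min hall hk ⟨hmk, hPk⟩

namespace PaperStmt

open Language Theory

section

variable {L : FirstOrder.Language.{u, v}}

theorem cons_subset_cons {T T' : L.Theory} (F : Set L.Sentence) (h : cons T F ⊆ T') :
    cons T F ⊆ cons T' F :=
  fun _ hφ => ⟨hφ.1, models_sentence_of_mem (h hφ)⟩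

theorem models_of_cons_models {T : L.Theory} {F : Set L.Sentence} {φ : L.Sentence}
    (h : cons T F ⊨ᵇ φ) : T ⊨ᵇ φ :=
  models_of_models_theory (fun _ hψ => hψ.2) h

theorem model_union_image_iff {M : Type*} [L.Structure M] {S : L.Theory} {ρ : ℕ → L.Sentence}
    {A : Set ℕ} : M ⊨ S ∪ ρ '' A ↔ M ⊨ S ∧ ∀ k ∈ A, M ⊨ ρ k := by
  rw [model_union_iff, model_iff (ρ '' A), forall_mem_image]

theorem models_of_models_first_not {S : L.Theory} {ρ : ℕ → L.Sentence} {m : ℕ} {φ : L.Sentence}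
    (h₀ : S ∪ ρ '' {k | m ≤ k} ⊨ᵇ φ)
    (hₙ : ∀ n, m ≤ n → S ∪ ρ '' {k | m ≤ k ∧ k < n} ∪ {∼(ρ n)} ⊨ᵇ φ) : S ⊨ᵇ φ := by
  refine models_sentence_iff.2 fun M => ?_
  rcases Nat.forall_or_exists_first_not (fun k => M ⊨ ρ k) m with hall | ⟨n, hn, hfail, hbefore⟩
  · have : M ⊨ S ∪ ρ '' {k | m ≤ k} := model_union_image_iff.2 ⟨M.is_model, hall⟩
    exact models_sentence_iff.1 h₀ (ModelType.of _ M)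
  · have : M ⊨ S ∪ ρ '' {k | m ≤ k ∧ k < n} ∪ {∼(ρ n)} :=
      model_union_iff.2 ⟨model_union_image_iff.2 ⟨M.is_model, fun k hk => hbefore k hk.1 hk.2⟩,
        model_singleton_iff.2 (Sentence.realize_not M |>.2 hfail)⟩
    exact models_sentence_iff.1 (hₙ n hn) (ModelType.of _ M)

end

theorem statement_12_general {L : FirstOrder.Language.{u, v}} (T : L.Theory) (F : Set L.Sentence)
    (ρ : ℕ → L.Sentence) :
    cons T F =
      cons (cons T F ∪ ρ '' {k | 1 ≤ k}) F ∩
        ⋂ n ∈ {n : ℕ | 1 ≤ n}, cons (cons T F ∪ (ρ '' {k | 1 ≤ k ∧ k < n}) ∪ {∼(ρ n)}) F := by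
  refine Subset.antisymm (fun φ hφ => ⟨cons_subset_cons F subset_union_left hφ,
    mem_iInter₂.2 fun n _ => cons_subset_cons F (subset_union_left.trans subset_union_left) hφ⟩) ?_
  rintro φ ⟨⟨hφF, h₀⟩, hₙ⟩
  exact ⟨hφF, models_of_cons_models <|
    models_of_models_first_not h₀ fun n hn => (mem_iInter₂.1 hₙ n hn).2⟩

/-- write `Σ = T^⊢ ∩ F`, `Σ₀ = (Σ ∪ {ρₙ : n ≥ 1})^⊢ ∩ F`,
`Σₙ = (Σ ∪ {ρ₁,…,ρₙ₋₁,¬ρₙ})^⊢ ∩ F` and `Σ_{>0} = ⋂_{n≥1} Σₙ`.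
Then `Σ = Σ₀ ∩ Σ_{>0}`. -/
theorem statement_12 {L : FirstOrder.Language.{u, v}} (T : L.Theory) (F : Set L.Sentence)
    (hF : IsFragment F) (ρ : ℕ → L.Sentence)
    (hρ : ∀ n : ℕ, 1 ≤ n → ρ n ∈ F ∧ (∼(ρ n)) ∈ F) :
    cons T F =
      cons (cons T F ∪ ρ '' {k | 1 ≤ k}) F ∩
        ⋂ n ∈ {n : ℕ | 1 ≤ n}, cons (cons T F ∪ (ρ '' {k | 1 ≤ k ∧ k < n}) ∪ {∼(ρ n)}) F :=
  statement_12_general T F ρ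

end PaperStmt
end

section
/- Let 𝔏 be a language and M, N be 𝔏-structures; if 𝔏 contains no constant symbols assume n ≥ 1. Then Th_{∃ₙ}(M) ⊆ Th_{∃ₙ}(N) if and only if Th_∃(M') ⊆ Th_∃(N) for every substructure M' ⊆ M generated by at most n elements. Consequently, Th_∃(M) ⊆ Th_∃(N) if and only if Th_∃(M') ⊆ Th_∃(N) for every finitely generated substructure M' ⊆ M. -/
open FirstOrder Set

universe u v w u₁ v₁ u₂ v₂

namespace PaperStmt

/-- Existential sentences with at most `n` quantifiers: `∃ y₁ … yₘ, ψ` with `ψ`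
quantifier-free and `m ≤ n`. -/
def existentialSentencesUpTo (L : FirstOrder.Language.{u, v}) (n : ℕ) : Set L.Sentence :=
  {φ | ∃ m, m ≤ n ∧ ∃ ψ : L.BoundedFormula Empty m, ψ.IsQF ∧ φ = ψ.exs}

/-- Existential sentences: `∃ y₁ … yₘ, ψ` with `ψ` quantifier-free. -/
def existentialSentences (L : FirstOrder.Language.{u, v}) : Set L.Sentence :=
  {φ | ∃ m, ∃ ψ : L.BoundedFormula Empty m, ψ.IsQF ∧ φ = ψ.exs}

/-- `Sent_{∃ₙ}(𝔏)`: the smallest fragment containing all existential sentences with at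
most `n` quantifiers. -/
def sentEn (L : FirstOrder.Language.{u, v}) (n : ℕ) : Set L.Sentence :=
  fragmentClosure (existentialSentencesUpTo L n)

/-- `Sent_∃(𝔏)`: the smallest fragment containing all existential sentences. -/
def sentE (L : FirstOrder.Language.{u, v}) : Set L.Sentence :=
  fragmentClosure (existentialSentences L)

section Aux

open FirstOrder.Language FirstOrder.Language.BoundedFormula

variable {L : FirstOrder.Language.{u, v}}

lemma fragmentClosure_subset {S F : Set L.Sentence} (hF : IsFragment F) (hS : S ⊆ F) :
    fragmentClosure S ⊆ F :=
  sInter_subset_of_mem ⟨hF, hS⟩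

lemma subset_fragmentClosure {S : Set L.Sentence} : S ⊆ fragmentClosure S :=
  fun _ hφ => mem_sInter.2 fun _ hF => hF.2 hφ

lemma isFragment_fragmentClosure {S : Set L.Sentence} : IsFragment (fragmentClosure S) := by
  refine ⟨mem_sInter.2 fun _ hF => hF.1.1, mem_sInter.2 fun _ hF => hF.1.2.1,
    fun φ ψ hφ hψ => ⟨mem_sInter.2 fun F hF => ?_, mem_sInter.2 fun F hF => ?_⟩⟩
  · exact (hF.1.2.2 φ ψ (mem_sInter.1 hφ F hF) (mem_sInter.1 hψ F hF)).1
  · exact (hF.1.2.2 φ ψ (mem_sInter.1 hφ F hF) (mem_sInter.1 hψ F hF)).2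

lemma realize_inf_iff {A : Type*} [L.Structure A] {φ ψ : L.Sentence} :
    A ⊨ (φ ⊓ ψ) ↔ (A ⊨ φ ∧ A ⊨ ψ) :=
  Formula.realize_inf

lemma realize_sup_iff {A : Type*} [L.Structure A] {φ ψ : L.Sentence} :
    A ⊨ (φ ⊔ ψ) ↔ (A ⊨ φ ∨ A ⊨ ψ) :=
  Formula.realize_sup

lemma isFragment_implied (A : Type*) (B : Type*) [L.Structure A] [L.Structure B] :
    IsFragment {φ : L.Sentence | A ⊨ φ → B ⊨ φ} := by
  refine ⟨fun _ => Formula.realize_top.2 trivial, fun h => absurd h (Formula.realize_bot).1,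
    fun φ ψ hφ hψ => ⟨fun h => ?_, fun h => ?_⟩⟩
  · rw [realize_inf_iff] at h ⊢
    exact ⟨hφ h.1, hψ h.2⟩
  · rw [realize_sup_iff] at h ⊢
    exact h.imp hφ hψ

lemma exs_realize_of_embedding {A B : Type*} [L.Structure A] [L.Structure B]
    (f : A ↪[L] B) {m : ℕ} {ψ : L.BoundedFormula Empty m} (hψ : ψ.IsQF)
    (h : A ⊨ ψ.exs) : B ⊨ ψ.exs := by
  rw [Sentence.Realize, BoundedFormula.realize_exs] at h ⊢
  obtain ⟨xs, hxs⟩ := h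
  refine ⟨f ∘ xs, ?_⟩
  rw [Subsingleton.elim (default : Empty → B) (f ∘ (default : Empty → A))]
  exact (hψ.realize_embedding f).2 hxs

lemma sentE_realize_of_embedding {A B : Type*} [L.Structure A] [L.Structure B]
    (f : A ↪[L] B) {φ : L.Sentence} (hφ : φ ∈ sentE L) (h : A ⊨ φ) : B ⊨ φ := by
  refine fragmentClosure_subset (isFragment_implied A B) ?_ hφ h
  rintro χ ⟨m, ψ, hq, rfl⟩
  exact exs_realize_of_embedding f hq

lemma isQF_toFormula {α : Type*} {m : ℕ} {ψ : L.BoundedFormula α m} (h : ψ.IsQF) :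
    ψ.toFormula.IsQF := by
  induction h with
  | falsum => exact isQF_bot
  | of_isAtomic h =>
    cases h with
    | equal t₁ t₂ => exact (IsAtomic.equal _ _).isQF
    | rel R ts => exact (IsAtomic.rel _ _).isQF
  | imp _ _ ih1 ih2 => exact ih1.imp ih2

lemma isQF_subst {α β : Type*} {m : ℕ} {ψ : L.BoundedFormula α m} (h : ψ.IsQF)
    (f : α → L.Term β) : (ψ.subst f).IsQF := by
  induction h with
  | falsum => exact isQF_bot
  | of_isAtomic h =>
    cases h with
    | equal t₁ t₂ => exact (IsAtomic.equal _ _).isQF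
    | rel R ts => exact (IsAtomic.rel _ _).isQF
  | imp _ _ ih1 ih2 => exact ih1.imp ih2

/-- The sentence obtained by substituting terms (in `k` variables) for the `m`
existentially quantified variables of `ψ`, then quantifying over the `k` variables. -/
noncomputable def substExs {m k : ℕ} (ψ : L.BoundedFormula Empty m)
    (σ : Fin m → L.Term (Fin k)) : L.Sentence :=
  (BoundedFormula.relabel Sum.inr
    (ψ.toFormula.subst (Sum.elim (fun e => e.elim) σ)) : L.BoundedFormula Empty (k + 0)).exs

lemma substExs_isQF_core {m k : ℕ} {ψ : L.BoundedFormula Empty m} (hψ : ψ.IsQF)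
    (σ : Fin m → L.Term (Fin k)) :
    (BoundedFormula.relabel Sum.inr
      (ψ.toFormula.subst (Sum.elim (fun e => e.elim) σ)) : L.BoundedFormula Empty (k + 0)).IsQF :=
  ((isQF_subst (isQF_toFormula hψ) _).relabel _)

lemma substExs_mem {n m k : ℕ} (hk : k ≤ n) {ψ : L.BoundedFormula Empty m} (hψ : ψ.IsQF)
    (σ : Fin m → L.Term (Fin k)) : substExs ψ σ ∈ existentialSentencesUpTo L n :=
  ⟨k + 0, by simpa using hk, _, substExs_isQF_core hψ σ, rfl⟩

lemma realize_substExs {m k : ℕ} (ψ : L.BoundedFormula Empty m)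
    (σ : Fin m → L.Term (Fin k)) (B : Type*) [L.Structure B] :
    B ⊨ substExs ψ σ ↔
      ∃ u : Fin k → B, ψ.Realize (fun e : Empty => e.elim) (fun j => (σ j).realize u) := by
  have key : ∀ u : Fin k → B,
      (BoundedFormula.relabel Sum.inr
        (ψ.toFormula.subst (Sum.elim (fun e : Empty => e.elim) σ))).Realize
          (default : Empty → B) u ↔
        ψ.Realize (fun e : Empty => e.elim) (fun j => (σ j).realize u) := by
    intro u
    rw [Formula.realize_relabel_sumInr]
    show (ψ.toFormula.subst (Sum.elim (fun e : Empty => e.elim) σ)).Realize u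
        (default : Fin 0 → B) ↔ _
    rw [BoundedFormula.realize_subst]
    show Formula.Realize ψ.toFormula _ ↔ _
    rw [BoundedFormula.realize_toFormula]
    have e1 : ((fun a => Term.realize u (Sum.elim (fun e : Empty => e.elim) σ a)) ∘ Sum.inl)
        = (fun e : Empty => e.elim) := Subsingleton.elim _ _
    rw [e1]
    exact Iff.rfl
  rw [substExs, Sentence.Realize, BoundedFormula.realize_exs]
  exact exists_congr fun u => key u

lemma exs_realize_closure {M : Type w} [L.Structure M] {m : ℕ}
    {ψ : L.BoundedFormula Empty m} (hq : ψ.IsQF) (b : Fin m → M)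
    (hb : ψ.Realize (fun e : Empty => e.elim) b) :
    (Substructure.closure L (Set.range b)) ⊨ ψ.exs := by
  rw [Sentence.Realize, BoundedFormula.realize_exs]
  refine ⟨fun j => ⟨b j, Substructure.subset_closure (mem_range_self j)⟩, ?_⟩
  apply (hq.realize_embedding (Substructure.closure L (Set.range b)).subtype).1
  have e1 : ((Substructure.closure L (Set.range b)).subtype ∘ (default : Empty → _))
      = (fun e : Empty => e.elim) := Subsingleton.elim _ _
  rw [e1]
  exact hb

/-- Core lemma: if `Th_{∃ₙ}(M) ⊆ Th_{∃ₙ}(N)` and `S` is generated by a finite set of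
at most `n` elements, then every existential sentence true in `S` is true in `N`. -/
lemma exs_realize_of_closure_card_le {M N : Type w} [L.Structure M] [L.Structure N] {n : ℕ}
    (hMN : ∀ φ ∈ sentEn L n, M ⊨ φ → N ⊨ φ)
    (s : Finset M) (hs : s.card ≤ n) {m : ℕ} {ψ : L.BoundedFormula Empty m} (hq : ψ.IsQF)
    (h : (Substructure.closure L (s : Set M)) ⊨ ψ.exs) : N ⊨ ψ.exs := by
  set S := Substructure.closure L (s : Set M) with hS
  rw [Sentence.Realize, BoundedFormula.realize_exs] at h
  obtain ⟨b, hb⟩ := h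
  -- transfer the witnesses to `M`
  have hbM : ψ.Realize (fun e : Empty => e.elim) (fun j => ((b j : M))) := by
    apply (hq.realize_embedding S.subtype).2 at hb
    have e1 : (S.subtype ∘ (default : Empty → S)) = (fun e : Empty => e.elim) :=
      Subsingleton.elim _ _
    rwa [e1] at hb
  -- represent the witnesses by terms over `s`
  have hmem : ∀ j, ∃ t : L.Term (s : Set M), t.realize (Subtype.val) = (b j : M) := fun j =>
    Substructure.mem_closure_iff_exists_term.1 (b j).2
  choose t ht using hmem
  let g := fun a : (s : Set M) => s.equivFin ⟨a.1, Finset.mem_coe.mp a.2⟩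
  let σ : Fin m → L.Term (Fin s.card) := fun j => (t j).relabel g
  let u : Fin s.card → M := fun i => ((s.equivFin.symm i : s) : M)
  have hug : ∀ a : (s : Set M), u (g a) = (a : M) := by
    intro a
    simp [u, g, Equiv.symm_apply_apply]
  -- `M` satisfies the substituted existential sentence
  have hMsub : M ⊨ substExs ψ σ := by
    rw [realize_substExs]
    refine ⟨u, ?_⟩
    have hσ : ∀ j, (σ j).realize u = (b j : M) := by
      intro j
      rw [← ht j]
      simp only [σ, Term.realize_relabel]
      congr 1
      funext a
      exact hug a
    have : (fun j => (σ j).realize u) = fun j => ((b j : M)) := funext hσ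
    rw [this]
    exact hbM
  -- hence so does `N`
  have hNsub : N ⊨ substExs ψ σ :=
    hMN _ (subset_fragmentClosure (substExs_mem hs hq σ)) hMsub
  rw [realize_substExs] at hNsub
  obtain ⟨w, hw⟩ := hNsub
  rw [Sentence.Realize, BoundedFormula.realize_exs]
  refine ⟨fun j => (σ j).realize w, ?_⟩
  have e1 : (default : Empty → N) = (fun e : Empty => e.elim) := Subsingleton.elim _ _
  rw [e1]
  exact hw

end Aux

/-- for structures `M, N` (with `n ≥ 1` if `𝔏` has no constant symbols):
`Th_{∃ₙ}(M) ⊆ Th_{∃ₙ}(N)` iff `Th_∃(M') ⊆ Th_∃(N)` for every substructure `M' ⊆ M`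
generated by at most `n` elements; consequently `Th_∃(M) ⊆ Th_∃(N)` iff
`Th_∃(M') ⊆ Th_∃(N)` for every finitely generated substructure `M' ⊆ M`. -/
theorem statement_13 {L : FirstOrder.Language.{u, v}} (n : ℕ)
    (hconst : IsEmpty L.Constants → 1 ≤ n)
    (M : Type w) [L.Structure M] (N : Type w) [L.Structure N] :
    ((∀ φ ∈ sentEn L n, M ⊨ φ → N ⊨ φ) ↔
      ∀ S : L.Substructure M, (∃ s : Finset M, s.card ≤ n ∧
          FirstOrder.Language.Substructure.closure L (s : Set M) = S) →
        ∀ φ ∈ sentE L, S ⊨ φ → N ⊨ φ) ∧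
    ((∀ φ ∈ sentE L, M ⊨ φ → N ⊨ φ) ↔
      ∀ S : L.Substructure M, S.FG → ∀ φ ∈ sentE L, S ⊨ φ → N ⊨ φ) := by
  open FirstOrder.Language FirstOrder.Language.BoundedFormula in
  constructor
  · constructor
    · -- part 1, forward
      rintro hMN S ⟨s, hcard, rfl⟩
      refine fragmentClosure_subset
        (isFragment_implied (Substructure.closure L (s : Set M)) N) ?_
      rintro χ ⟨m, ψ, hq, rfl⟩ h
      exact exs_realize_of_closure_card_le hMN s hcard hq h
    · -- part 1, backward
      intro h
      refine fragmentClosure_subset (isFragment_implied M N) ?_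
      rintro χ ⟨m, hm, ψ, hq, rfl⟩ hMreal
      classical
      rw [Sentence.Realize, BoundedFormula.realize_exs] at hMreal
      obtain ⟨b, hb⟩ := hMreal
      have hb' : ψ.Realize (fun e : Empty => e.elim) b := by
        rwa [Subsingleton.elim (default : Empty → M) (fun e : Empty => e.elim)] at hb
      refine h (Substructure.closure L (Set.range b))
        ⟨Finset.image b Finset.univ, ?_, by rw [Finset.coe_image, Finset.coe_univ, Set.image_univ]⟩
        ψ.exs (subset_fragmentClosure ⟨m, ψ, hq, rfl⟩) (exs_realize_closure hq b hb')
      exact le_trans (Finset.card_image_le.trans (by simp)) hm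
  · constructor
    · -- part 2, forward
      intro hM S _ φ hφ hS
      exact hM φ hφ (sentE_realize_of_embedding S.subtype hφ hS)
    · -- part 2, backward
      intro h φ hφ hMreal
      set F : Set L.Sentence := {χ : L.Sentence | χ ∈ sentE L ∧
          (M ⊨ χ → ∃ S : L.Substructure M, S.FG ∧ S ⊨ χ)} with hF
      have key : φ ∈ F := by
        refine fragmentClosure_subset (F := F) ⟨⟨isFragment_fragmentClosure.1, fun _ =>
          ⟨⊥, Substructure.fg_bot, Formula.realize_top.2 trivial⟩⟩,
          ⟨isFragment_fragmentClosure.2.1, fun hbot => absurd hbot Formula.realize_bot.1⟩,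
          fun χ₁ χ₂ h1 h2 => ⟨⟨(isFragment_fragmentClosure.2.2 χ₁ χ₂ h1.1 h2.1).1, ?_⟩,
            ⟨(isFragment_fragmentClosure.2.2 χ₁ χ₂ h1.1 h2.1).2, ?_⟩⟩⟩ ?_ hφ
        · intro hreal
          rw [realize_inf_iff] at hreal
          obtain ⟨S₁, hS₁fg, hS₁⟩ := h1.2 hreal.1
          obtain ⟨S₂, hS₂fg, hS₂⟩ := h2.2 hreal.2
          refine ⟨S₁ ⊔ S₂, hS₁fg.sup hS₂fg, realize_inf_iff.2 ⟨?_, ?_⟩⟩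
          · exact sentE_realize_of_embedding (Substructure.inclusion le_sup_left) h1.1 hS₁
          · exact sentE_realize_of_embedding (Substructure.inclusion le_sup_right) h2.1 hS₂
        · intro hreal
          rw [realize_sup_iff] at hreal
          rcases hreal with hreal | hreal
          · obtain ⟨S₁, hS₁fg, hS₁⟩ := h1.2 hreal
            exact ⟨S₁, hS₁fg, realize_sup_iff.2 (Or.inl hS₁)⟩
          · obtain ⟨S₂, hS₂fg, hS₂⟩ := h2.2 hreal
            exact ⟨S₂, hS₂fg, realize_sup_iff.2 (Or.inr hS₂)⟩
        · rintro χ ⟨m, ψ, hq, rfl⟩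
          refine ⟨subset_fragmentClosure ⟨m, ψ, hq, rfl⟩, fun hreal => ?_⟩
          rw [Sentence.Realize, BoundedFormula.realize_exs] at hreal
          obtain ⟨b, hb⟩ := hreal
          have hb' : ψ.Realize (fun e : Empty => e.elim) b := by
            rwa [Subsingleton.elim (default : Empty → M) (fun e : Empty => e.elim)] at hb
          exact ⟨Substructure.closure L (Set.range b),
            Substructure.fg_closure (Set.finite_range b), exs_realize_closure hq b hb'⟩
      obtain ⟨S, hSfg, hSreal⟩ := key.2 hMreal
      exact h S hSfg φ hφ hSreal

end PaperStmt
end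

section
/- Let (B, B̂, ι) be an arch such that B̂ satisfies (sur) and B admits an elimination ε. Then for every nonempty index set I and theories Rᵢ ⊆ L̂₁ (i ∈ I): (T₂ ∪ ι(⋂ᵢ (T₁ ∪ Rᵢ)^⊢ ∩ L₁))^⊢ ∩ L₂ = (T₂ ∪ ι(⋂ᵢ (T₁ ∪ Rᵢ)^⊢ ∩ L̂₁))^⊢ ∩ L₂ = ⋂ᵢ (T₂ ∪ ιRᵢ)^⊢ ∩ L₂. In particular, for every R ⊆ L̂₁: (T₂ ∪ ι((T₁ ∪ R)^⊢ ∩ L₁))^⊢ ∩ L₂ = (T₂ ∪ ιR)^⊢ ∩ L₂. -/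
/-!
The three theories are squeezed between each other. Enlarging the fragment `L₁ ⊆ L̂₁` only
strengthens the left-hand theory. A model `M` of `T₂ ∪ ιRᵢ` has `σM ⊨ T₁ ∪ Rᵢ`, so `M` satisfies
the `ι`-image of every `L̂₁`-consequence of `T₁ ∪ Rᵢ`. Conversely, if `T₂ ∪ ιRᵢ ⊢ ψ` with
`ψ ∈ L₂`, then `T₁ ∪ Rᵢ ⊢ εψ`: by (sur) every model `N` of `T₁ ∪ Rᵢ` is `L̂₁`-equivalent to some
`σM`, and such an `M` models `T₂ ∪ ιRᵢ`. So `εψ` lies in `⋂ᵢ (T₁ ∪ Rᵢ)^⊢ ∩ L₁`, and over `T₂`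
its `ι`-image `ιεψ` is equivalent to `ψ`.
-/

open FirstOrder Set

universe u v w u₁ v₁ u₂ v₂

namespace PaperStmt

open FirstOrder.Language FirstOrder.Language.Theory

section Consequences

variable {L : FirstOrder.Language.{u, v}}

theorem cons_mono {T T' : L.Theory} {F F' : Set L.Sentence} (hT : T ⊆ T') (hF : F ⊆ F') :
    cons T F ⊆ cons T' F' := fun _ ⟨hφF, hφ⟩ =>
  ⟨hF hφF, models_of_models_theory (fun _ hψ => models_sentence_of_mem (hT hψ)) hφ⟩

theorem models_union_iff {T S : L.Theory} {φ : L.Sentence} :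
    T ∪ S ⊨ᵇ φ ↔ ∀ M : Mod T, (∀ ψ ∈ S, M ⊨ ψ) → M ⊨ φ := by
  rw [models_sentence_iff]
  constructor
  · intro h M hS
    have : (M : Type (max u v)) ⊨ T ∪ S := model_union_iff.2 ⟨M.is_model, (model_iff S).2 hS⟩
    exact h (ModelType.of (T ∪ S) M)
  · intro h M
    exact h (M.subtheoryModel subset_union_left)
      fun ψ hψ => realize_sentence_of_mem (T ∪ S) (mem_union_right T hψ)

end Consequences

section Arch

variable {L₁ : FirstOrder.Language.{u₁, v₁}} {L₂ : FirstOrder.Language.{u₂, v₂}}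
  {F₁ Fh₁ : Set L₁.Sentence} {F₂ : Set L₂.Sentence} {T₁ : L₁.Theory} {T₂ : L₂.Theory}
  {σ : Mod T₂ → Mod T₁} {ι : L₁.Sentence → L₂.Sentence} {ε : L₂.Sentence → L₁.Sentence}

theorem forall_realize_image_iff (hι : ∀ φ ∈ Fh₁, ∀ M : Mod T₂, (σ M ⊨ φ ↔ M ⊨ ι φ))
    {R : Set L₁.Sentence} (hR : R ⊆ Fh₁) (M : Mod T₂) :
    (∀ χ ∈ ι '' R, M ⊨ χ) ↔ ∀ φ ∈ R, σ M ⊨ φ := by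
  simp only [forall_mem_image]
  exact forall₂_congr fun φ hφ => (hι φ (hR hφ) M).symm

theorem realize_of_mem_cons_union (hι : ∀ φ ∈ Fh₁, ∀ M : Mod T₂, (σ M ⊨ φ ↔ M ⊨ ι φ))
    {R : Set L₁.Sentence} {M : Mod T₂} (hM : ∀ φ ∈ R, σ M ⊨ φ) {φ : L₁.Sentence}
    (hφ : φ ∈ cons (T₁ ∪ R) Fh₁) : M ⊨ ι φ :=
  (hι φ hφ.1 M).1 (models_union_iff.1 hφ.2 (σ M) hM)

theorem models_elim_of_models_union_image (hι : ∀ φ ∈ Fh₁, ∀ M : Mod T₂, (σ M ⊨ φ ↔ M ⊨ ι φ))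
    (hsur : ∀ N : Mod T₁, ∃ M : Mod T₂, th Fh₁ N = th Fh₁ (σ M))
    {R : Set L₁.Sentence} (hR : R ⊆ Fh₁) {ψ : L₂.Sentence} (hεψ : ε ψ ∈ Fh₁)
    (hε : ∀ M : Mod T₂, (σ M ⊨ ε ψ ↔ M ⊨ ψ)) (hψ : T₂ ∪ ι '' R ⊨ᵇ ψ) :
    T₁ ∪ R ⊨ᵇ ε ψ := by
  refine models_union_iff.2 fun N hN => ?_
  obtain ⟨M, hNM⟩ := hsur N
  have hσM : ∀ φ ∈ R, σ M ⊨ φ := fun φ hφ =>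
    ((Set.ext_iff.1 hNM φ).1 ⟨hR hφ, hN φ hφ⟩).2
  have hMψ : M ⊨ ψ := models_union_iff.1 hψ M ((forall_realize_image_iff hι hR M).2 hσM)
  exact ((Set.ext_iff.1 hNM (ε ψ)).2 ⟨hεψ, (hε M).2 hMψ⟩).2

theorem cons_union_image_iInter_subset_iInter
    (hι : ∀ φ ∈ Fh₁, ∀ M : Mod T₂, (σ M ⊨ φ ↔ M ⊨ ι φ))
    {I : Type w} (R : I → Set L₁.Sentence) (hR : ∀ i, R i ⊆ Fh₁) :
    cons (T₂ ∪ ι '' ⋂ i, cons (T₁ ∪ R i) Fh₁) F₂ ⊆ ⋂ i, cons (T₂ ∪ ι '' R i) F₂ := by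
  rintro ψ ⟨hψF, hψ⟩
  refine mem_iInter.2 fun i => ⟨hψF, models_union_iff.2 fun M hM => ?_⟩
  have hσM := (forall_realize_image_iff hι (hR i) M).1 hM
  refine models_union_iff.1 hψ M ?_
  rintro _ ⟨φ, hφ, rfl⟩
  exact realize_of_mem_cons_union hι hσM (mem_iInter.1 hφ i)

theorem iInter_cons_union_image_subset_cons (hsub₁ : F₁ ⊆ Fh₁)
    (hι : ∀ φ ∈ Fh₁, ∀ M : Mod T₂, (σ M ⊨ φ ↔ M ⊨ ι φ))
    (hsur : ∀ N : Mod T₁, ∃ M : Mod T₂, th Fh₁ N = th Fh₁ (σ M))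
    (hεF : ∀ ψ ∈ F₂, ε ψ ∈ F₁) (hε : ∀ ψ ∈ F₂, ∀ M : Mod T₂, (σ M ⊨ ε ψ ↔ M ⊨ ψ))
    {I : Type w} [Nonempty I] (R : I → Set L₁.Sentence) (hR : ∀ i, R i ⊆ Fh₁) :
    ⋂ i, cons (T₂ ∪ ι '' R i) F₂ ⊆ cons (T₂ ∪ ι '' ⋂ i, cons (T₁ ∪ R i) F₁) F₂ := by
  intro ψ hψ
  have hψF : ψ ∈ F₂ := (mem_iInter.1 hψ (Classical.arbitrary I)).1
  have hεψ : ε ψ ∈ ⋂ i, cons (T₁ ∪ R i) F₁ := mem_iInter.2 fun i =>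
    ⟨hεF ψ hψF, models_elim_of_models_union_image hι hsur (hR i) (hsub₁ (hεF ψ hψF))
      (hε ψ hψF) (mem_iInter.1 hψ i).2⟩
  refine ⟨hψF, models_union_iff.2 fun M hM => (hε ψ hψF M).1 ?_⟩
  exact (hι (ε ψ) (hsub₁ (hεF ψ hψF)) M).2 (hM _ ⟨ε ψ, hεψ, rfl⟩)

theorem cons_union_image_iInter_eq (hsub₁ : F₁ ⊆ Fh₁)
    (hι : ∀ φ ∈ Fh₁, ∀ M : Mod T₂, (σ M ⊨ φ ↔ M ⊨ ι φ))
    (hsur : ∀ N : Mod T₁, ∃ M : Mod T₂, th Fh₁ N = th Fh₁ (σ M))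
    (hεF : ∀ ψ ∈ F₂, ε ψ ∈ F₁) (hε : ∀ ψ ∈ F₂, ∀ M : Mod T₂, (σ M ⊨ ε ψ ↔ M ⊨ ψ))
    {I : Type w} [Nonempty I] (R : I → Set L₁.Sentence) (hR : ∀ i, R i ⊆ Fh₁) :
    cons (T₂ ∪ ι '' (⋂ i, cons (T₁ ∪ R i) F₁)) F₂ =
        cons (T₂ ∪ ι '' (⋂ i, cons (T₁ ∪ R i) Fh₁)) F₂ ∧
      cons (T₂ ∪ ι '' (⋂ i, cons (T₁ ∪ R i) Fh₁)) F₂ = ⋂ i, cons (T₂ ∪ ι '' R i) F₂ := by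
  have hAB : cons (T₂ ∪ ι '' ⋂ i, cons (T₁ ∪ R i) F₁) F₂ ⊆
      cons (T₂ ∪ ι '' ⋂ i, cons (T₁ ∪ R i) Fh₁) F₂ :=
    cons_mono (union_subset_union_right _ <| image_mono <| iInter_mono fun _ =>
      cons_mono subset_rfl hsub₁) subset_rfl
  have hBC := cons_union_image_iInter_subset_iInter (F₂ := F₂) hι R hR
  have hCA := iInter_cons_union_image_subset_cons hsub₁ hι hsur hεF hε R hR
  exact ⟨hAB.antisymm (hBC.trans hCA), hBC.antisymm (hCA.trans hAB)⟩

end Arch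

theorem statement_19_general {L₁ : FirstOrder.Language.{u₁, v₁}} {L₂ : FirstOrder.Language.{u₂, v₂}}
    {F₁ Fh₁ : Set L₁.Sentence} {F₂ : Set L₂.Sentence} {T₁ : L₁.Theory} {T₂ : L₂.Theory}
    (hsub₁ : F₁ ⊆ Fh₁)
    (σ : Mod T₂ → Mod T₁)
    (ι : L₁.Sentence → L₂.Sentence)
    (hι : ∀ φ ∈ Fh₁, ∀ M : Mod T₂, (σ M ⊨ φ ↔ M ⊨ ι φ))
    (hsur : ∀ N : Mod T₁, ∃ M : Mod T₂, th Fh₁ N = th Fh₁ (σ M))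
    (ε : L₂.Sentence → L₁.Sentence) (hεF : ∀ ψ ∈ F₂, ε ψ ∈ F₁)
    (hε : ∀ ψ ∈ F₂, ∀ M : Mod T₂, (σ M ⊨ ε ψ ↔ M ⊨ ψ))
    {I : Type*} [Nonempty I] (R : I → Set L₁.Sentence) (hR : ∀ i, R i ⊆ Fh₁) :
    (cons (T₂ ∪ ι '' (⋂ i, cons (T₁ ∪ R i) F₁)) F₂ =
        cons (T₂ ∪ ι '' (⋂ i, cons (T₁ ∪ R i) Fh₁)) F₂ ∧
      cons (T₂ ∪ ι '' (⋂ i, cons (T₁ ∪ R i) Fh₁)) F₂ = ⋂ i, cons (T₂ ∪ ι '' R i) F₂) ∧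
    ∀ R' : Set L₁.Sentence, R' ⊆ Fh₁ →
      cons (T₂ ∪ ι '' cons (T₁ ∪ R') F₁) F₂ = cons (T₂ ∪ ι '' R') F₂ ∧
      cons (T₂ ∪ ι '' cons (T₁ ∪ R') Fh₁) F₂ = cons (T₂ ∪ ι '' R') F₂ := by
  refine ⟨cons_union_image_iInter_eq hsub₁ hι hsur hεF hε R hR, fun R' hR' => ?_⟩
  have h := cons_union_image_iInter_eq hsub₁ hι hsur hεF hε (fun _ : Unit => R') fun _ => hR'
  simp only [iInter_const] at h
  exact ⟨h.1.trans h.2, h.2⟩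

/-- let `(B, B̂, ι)` be an arch such that `B̂` satisfies (sur) and `B` admits
an elimination `ε`.  Then for every nonempty family `Rᵢ ⊆ L̂₁` (`i ∈ I`):
`(T₂ ∪ ι(⋂ᵢ (T₁ ∪ Rᵢ)_{L₁}))_{L₂} = (T₂ ∪ ι(⋂ᵢ (T₁ ∪ Rᵢ)_{L̂₁}))_{L₂}
  = ⋂ᵢ (T₂ ∪ ιRᵢ)_{L₂}`;
in particular `(T₂ ∪ ι((T₁ ∪ R)_{L₁}))_{L₂} = (T₂ ∪ ι((T₁ ∪ R)_{L̂₁}))_{L₂} = (T₂ ∪ ιR)_{L₂}`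
for every `R ⊆ L̂₁`. -/
theorem statement_19 {L₁ : FirstOrder.Language.{u₁, v₁}} {L₂ : FirstOrder.Language.{u₂, v₂}}
    {F₁ Fh₁ : Set L₁.Sentence} {F₂ Fh₂ : Set L₂.Sentence} {T₁ : L₁.Theory} {T₂ : L₂.Theory}
    (hF₁ : IsFragment F₁) (hF₂ : IsFragment F₂) (hFh₁ : IsFragment Fh₁) (hFh₂ : IsFragment Fh₂)
    (hsub₁ : F₁ ⊆ Fh₁) (hsub₂ : F₂ ⊆ Fh₂)
    (σ : Mod T₂ → Mod T₁)
    (ι : L₁.Sentence → L₂.Sentence)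
    (hιFh : ∀ φ ∈ Fh₁, ι φ ∈ Fh₂) (hιF : ∀ φ ∈ F₁, ι φ ∈ F₂)
    (hι : ∀ φ ∈ Fh₁, ∀ M : Mod T₂, (σ M ⊨ φ ↔ M ⊨ ι φ))
    (hsur : ∀ N : Mod T₁, ∃ M : Mod T₂, th Fh₁ N = th Fh₁ (σ M))
    (ε : L₂.Sentence → L₁.Sentence) (hεF : ∀ ψ ∈ F₂, ε ψ ∈ F₁)
    (hε : ∀ ψ ∈ F₂, ∀ M : Mod T₂, (σ M ⊨ ε ψ ↔ M ⊨ ψ))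
    {I : Type*} [Nonempty I] (R : I → Set L₁.Sentence) (hR : ∀ i, R i ⊆ Fh₁) :
    (cons (T₂ ∪ ι '' (⋂ i, cons (T₁ ∪ R i) F₁)) F₂ =
        cons (T₂ ∪ ι '' (⋂ i, cons (T₁ ∪ R i) Fh₁)) F₂ ∧
      cons (T₂ ∪ ι '' (⋂ i, cons (T₁ ∪ R i) Fh₁)) F₂ = ⋂ i, cons (T₂ ∪ ι '' R i) F₂) ∧
    ∀ R' : Set L₁.Sentence, R' ⊆ Fh₁ →
      cons (T₂ ∪ ι '' cons (T₁ ∪ R') F₁) F₂ = cons (T₂ ∪ ι '' R') F₂ ∧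
      cons (T₂ ∪ ι '' cons (T₁ ∪ R') Fh₁) F₂ = cons (T₂ ∪ ι '' R') F₂ :=
  statement_19_general hsub₁ σ ι hι hsur ε hεF hε R hR

end PaperStmt
end
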